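/- Let (M_j(1), M_{-j}(0), C) be random variables on a finite probability space such that M_j(1) and M_{-j}(0) are conditionally independent given C. Then for all (m_j, m_{-j}, c) with P(C = c) > 0: P(M_j(1) = m_j, M_{-j}(0) = m_{-j} | C = c) = P(M_j(1) = m_j | C = c) · P(M_{-j}(0) = m_{-j} | C = c). Moreover, if additionally a randomized treatment A ∈ {0,1} is independent of (M_j(1), M_{-j}(0), C) and consistency gives M_j = M_j(a), M_{-j} = M_{-j}(a) on {A = a}, then P(M_j(1) = m_j, M_{-j}(0) = m_{-j} | C = c) = P(M_j = m_j | A = 1, C = c) · P(M_{-j} = m_{-j} | A = 0, C = c). -/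
import Mathlib


open Finset

open scoped Classical in
noncomputable def Pr {Ω : Type*} [Fintype Ω] (p : Ω → ℝ) (E : Ω → Prop) : ℝ :=
  ∑ ω, if E ω then p ω else 0

noncomputable def EV {Ω : Type*} [Fintype Ω] (p : Ω → ℝ) (X : Ω → ℝ) : ℝ :=
  ∑ ω, p ω * X ω

noncomputable def cPr {Ω : Type*} [Fintype Ω] (p : Ω → ℝ) (E F : Ω → Prop) : ℝ :=
  Pr p (fun ω => E ω ∧ F ω) / Pr p F

open scoped Classical in
noncomputable def cEV {Ω : Type*} [Fintype Ω] (p : Ω → ℝ) (X : Ω → ℝ) (F : Ω → Prop) : ℝ :=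
  (∑ ω, if F ω then p ω * X ω else 0) / Pr p F

open scoped Classical in
lemma Pr_congr {Ω : Type*} [Fintype Ω] (p : Ω → ℝ) {E F : Ω → Prop}
    (h : ∀ ω, E ω ↔ F ω) : Pr p E = Pr p F := by
  unfold Pr; apply Finset.sum_congr rfl; intro ω _
  simp [h ω]

open scoped Classical in
lemma Pr_decomp {Ω T : Type*} [Fintype Ω] [Fintype T] (p : Ω → ℝ)
    (f : Ω → T) (Q : T → Prop) (R : Ω → Prop) :
    Pr p (fun ω => R ω ∧ Q (f ω)) =
      ∑ t : T, if Q t then Pr p (fun ω => R ω ∧ f ω = t) else 0 := by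
  have h : ∀ t : T, (if Q t then Pr p (fun ω => R ω ∧ f ω = t) else 0)
      = ∑ ω, if R ω ∧ Q (f ω) ∧ f ω = t then p ω else 0 := by
    intro t; unfold Pr
    by_cases h : Q t
    · simp only [h, if_true]
      apply Finset.sum_congr rfl; intro ω _
      congr 1
      simp only [eq_iff_iff]
      constructor
      · rintro ⟨hR, hf⟩; exact ⟨hR, hf ▸ h, hf⟩
      · rintro ⟨hR, _, hf⟩; exact ⟨hR, hf⟩
    · simp only [h, if_false]
      symm; apply Finset.sum_eq_zero; intro ω _
      rw [if_neg]; rintro ⟨_, hQ, hf⟩; exact h (hf ▸ hQ)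
  simp_rw [h]
  rw [Finset.sum_comm]
  unfold Pr
  apply Finset.sum_congr rfl; intro ω _
  rw [Finset.sum_eq_single (f ω)]
  · simp
  · intro t _ ht; rw [if_neg]; rintro ⟨_, _, hf⟩; exact ht hf.symm
  · intro h; exact absurd (Finset.mem_univ _) h

open scoped Classical in
lemma Pr_true_and {Ω : Type*} [Fintype Ω] (p : Ω → ℝ) (E : Ω → Prop) :
    Pr p (fun ω => True ∧ E ω) = Pr p E := by
  unfold Pr; simp

/-- Under cross-world conditional independence given C, the cross-world joint
distribution factorizes; with randomization and consistency it is moreover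
identified by the product of single-world observed conditional mediator densities. -/
theorem crossworld_identification
    {Ω 𝓜₁ 𝓜₂ 𝓒 : Type*} [Fintype Ω] [Fintype 𝓜₁] [Fintype 𝓜₂] [Fintype 𝓒]
    (p : Ω → ℝ) (hp : ∀ ω, 0 ≤ p ω) (hp1 : ∑ ω, p ω = 1)
    (Mjpot : Fin 2 → Ω → 𝓜₁) (Mmjpot : Fin 2 → Ω → 𝓜₂) (C : Ω → 𝓒)
    (A : Ω → Fin 2) (Mj : Ω → 𝓜₁) (Mmj : Ω → 𝓜₂)
    (hci : ∀ (c : 𝓒) (mj : 𝓜₁) (mmj : 𝓜₂), 0 < Pr p (fun ω => C ω = c) →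
      cPr p (fun ω => Mjpot 1 ω = mj ∧ Mmjpot 0 ω = mmj) (fun ω => C ω = c) =
        cPr p (fun ω => Mjpot 1 ω = mj) (fun ω => C ω = c) *
        cPr p (fun ω => Mmjpot 0 ω = mmj) (fun ω => C ω = c))
    (hindep : ∀ (a : Fin 2) (t : (Fin 2 → 𝓜₁) × (Fin 2 → 𝓜₂) × 𝓒),
      Pr p (fun ω => A ω = a ∧
          (fun a' => Mjpot a' ω, fun a' => Mmjpot a' ω, C ω) = t) =
        Pr p (fun ω => A ω = a) *
        Pr p (fun ω => (fun a' => Mjpot a' ω, fun a' => Mmjpot a' ω, C ω) = t))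
    (hconsMj : ∀ ω, Mj ω = Mjpot (A ω) ω)
    (hconsMmj : ∀ ω, Mmj ω = Mmjpot (A ω) ω)
    (hposAC : ∀ (a : Fin 2) (c : 𝓒), 0 < Pr p (fun ω => C ω = c) →
      0 < Pr p (fun ω => A ω = a ∧ C ω = c))
    (c : 𝓒) (mj : 𝓜₁) (mmj : 𝓜₂) (hc : 0 < Pr p (fun ω => C ω = c)) :
    (cPr p (fun ω => Mjpot 1 ω = mj ∧ Mmjpot 0 ω = mmj) (fun ω => C ω = c) =
      cPr p (fun ω => Mjpot 1 ω = mj) (fun ω => C ω = c) *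
      cPr p (fun ω => Mmjpot 0 ω = mmj) (fun ω => C ω = c)) ∧
    (cPr p (fun ω => Mjpot 1 ω = mj ∧ Mmjpot 0 ω = mmj) (fun ω => C ω = c) =
      cPr p (fun ω => Mj ω = mj) (fun ω => A ω = 1 ∧ C ω = c) *
      cPr p (fun ω => Mmj ω = mmj) (fun ω => A ω = 0 ∧ C ω = c)) := by
  classical
  refine ⟨hci c mj mmj hc, ?_⟩
  set vec : Ω → (Fin 2 → 𝓜₁) × (Fin 2 → 𝓜₂) × 𝓒 :=
    fun ω => (fun a' => Mjpot a' ω, fun a' => Mmjpot a' ω, C ω) with hvec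
  -- key independence for arbitrary events of the potential outcomes and C
  have key : ∀ (a : Fin 2) (Q : (Fin 2 → 𝓜₁) × (Fin 2 → 𝓜₂) × 𝓒 → Prop),
      Pr p (fun ω => A ω = a ∧ Q (vec ω)) =
        Pr p (fun ω => A ω = a) * Pr p (fun ω => Q (vec ω)) := by
    intro a Q
    rw [Pr_decomp p vec Q (fun ω => A ω = a)]
    have h2 : Pr p (fun ω => Q (vec ω)) =
        ∑ t, if Q t then Pr p (fun ω => vec ω = t) else 0 := by
      rw [← Pr_true_and p (fun ω => Q (vec ω)),
        Pr_decomp p vec Q (fun _ => True)]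
      apply Finset.sum_congr rfl; intro t _
      by_cases h : Q t
      · simp only [h, if_true, Pr_true_and]
      · simp [h]
    rw [h2, Finset.mul_sum]
    apply Finset.sum_congr rfl; intro t _
    by_cases h : Q t
    · simp only [h, if_true]; exact hindep a t
    · simp [h]
  have hAC : ∀ a : Fin 2, Pr p (fun ω => A ω = a ∧ C ω = c) =
      Pr p (fun ω => A ω = a) * Pr p (fun ω => C ω = c) :=
    fun a => key a (fun t => t.2.2 = c)
  have hApos : ∀ a : Fin 2, Pr p (fun ω => A ω = a) ≠ 0 := by
    intro a
    have := hposAC a c hc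
    rw [hAC a] at this
    intro h0; rw [h0, zero_mul] at this; exact lt_irrefl 0 this
  have hCne : Pr p (fun ω => C ω = c) ≠ 0 := ne_of_gt hc
  -- identification of each factor
  have hfac1 : cPr p (fun ω => Mj ω = mj) (fun ω => A ω = 1 ∧ C ω = c) =
      cPr p (fun ω => Mjpot 1 ω = mj) (fun ω => C ω = c) := by
    unfold cPr
    have e1 : Pr p (fun ω => Mj ω = mj ∧ (A ω = 1 ∧ C ω = c)) =
        Pr p (fun ω => A ω = 1 ∧ ((fun t => t.1 1 = mj ∧ t.2.2 = c) (vec ω))) := by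
      apply Pr_congr; intro ω
      constructor
      · rintro ⟨hm, ha, hCc⟩
        exact ⟨ha, by rw [← hm, hconsMj ω, ha], hCc⟩
      · rintro ⟨ha, hm, hCc⟩
        exact ⟨by rw [hconsMj ω, ha]; exact hm, ha, hCc⟩
    rw [e1, key 1 (fun t => t.1 1 = mj ∧ t.2.2 = c), hAC 1,
      mul_div_mul_left _ _ (hApos 1)]
  have hfac2 : cPr p (fun ω => Mmj ω = mmj) (fun ω => A ω = 0 ∧ C ω = c) =
      cPr p (fun ω => Mmjpot 0 ω = mmj) (fun ω => C ω = c) := by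
    unfold cPr
    have e1 : Pr p (fun ω => Mmj ω = mmj ∧ (A ω = 0 ∧ C ω = c)) =
        Pr p (fun ω => A ω = 0 ∧ ((fun t => t.2.1 0 = mmj ∧ t.2.2 = c) (vec ω))) := by
      apply Pr_congr; intro ω
      constructor
      · rintro ⟨hm, ha, hCc⟩
        exact ⟨ha, by rw [← hm, hconsMmj ω, ha], hCc⟩
      · rintro ⟨ha, hm, hCc⟩
        exact ⟨by rw [hconsMmj ω, ha]; exact hm, ha, hCc⟩
    rw [e1, key 0 (fun t => t.2.1 0 = mmj ∧ t.2.2 = c), hAC 0,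
      mul_div_mul_left _ _ (hApos 0)]
  rw [hfac1, hfac2]
  exact hci c mj mmj hc
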